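/- Let U : Δ → Δ be an expanding Young tower with μ(Δ_n) ≤ C·ρⁿ for some ρ < 1. Let φ be the first return time to the basis Δ₀ and U₀ the induced map on Δ₀. Then for every sufficiently small κ > 0 there exist C' > 0 and θ < 1 such that for all n ∈ ℕ, μ({x ∈ Δ₀ : ∑_{0 ≤ i ≤ κ·n} φ(U₀^i x) ≥ n/2}) ≤ C'·θⁿ. -/

import Mathlib

open MeasureTheory Filter Set
open scoped ENNReal NNReal Topology Classical

/-- A function `f : ℝ → ℝ` is slowly varying if `f (λ x) / f x → 1` as `x → ∞`,
for every `λ > 0`. -/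
def SlowlyVarying (f : ℝ → ℝ) : Prop :=
  ∀ lam : ℝ, 0 < lam → Filter.Tendsto (fun x => f (lam * x) / f x) Filter.atTop (nhds 1)

/-- An expanding Young tower on a probability space `(Δ, μ)`, for the map `U`. -/
structure YoungTower {Δ : Type*} [MeasurableSpace Δ] (μ : Measure Δ) (U : Δ → Δ) where
  /-- the height of column `p` -/
  r : ℕ → ℕ
  r_pos : ∀ p, 0 < r p
  /-- `cell k p` is the element `Δ_{k,p}` of the partition -/
  cell : ℕ → ℕ → Set Δ
  cell_meas : ∀ k p, MeasurableSet (cell k p)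
  cell_empty : ∀ k p, r p ≤ k → cell k p = ∅
  cell_cover : ∀ x : Δ, ∃ p k, k < r p ∧ x ∈ cell k p
  cell_disj : ∀ k p k' p', (k, p) ≠ (k', p') → Disjoint (cell k p) (cell k' p')
  measurable_U : Measurable U
  measurePreserving_U : MeasurePreserving U μ μ
  isProb : IsProbabilityMeasure μ
  /-- `U` is a measurable isomorphism from `Δ_{k,p}` onto `Δ_{k+1,p}` when `k < r p - 1`... -/
  map_up : ∀ p k, k + 1 < r p → Set.BijOn U (cell k p) (cell (k + 1) p)
  /-- ... which is measure preserving -/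
  map_up_measure : ∀ p k, k + 1 < r p → ∀ A : Set Δ, A ⊆ cell k p → MeasurableSet A →
      μ (U '' A) = μ A
  /-- `U` is a measurable isomorphism from `Δ_{r_p - 1, p}` onto the basis `⋃ m, Δ_{0,m}` -/
  map_top : ∀ p, Set.BijOn U (cell (r p - 1) p) (⋃ m, cell 0 m)
  /-- the height function `ω` -/
  height : Δ → ℕ
  height_spec : ∀ k p, ∀ x ∈ cell k p, height x = k
  /-- the projection `π₀` to the basis -/
  proj : Δ → Δ
  proj_spec : ∀ k p, ∀ x ∈ cell k p, proj x ∈ cell 0 p ∧ U^[k] (proj x) = x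
  /-- the separation time -/
  s : Δ → Δ → ℕ
  s_eq_zero : ∀ x y : Δ, (¬ ∃ p k, k < r p ∧ x ∈ cell k p ∧ y ∈ cell k p) → s x y = 0
  s_mid : ∀ p k, k + 1 < r p → ∀ x ∈ cell k p, ∀ y ∈ cell k p, s x y = s (U x) (U y)
  s_top : ∀ p, ∀ x ∈ cell (r p - 1) p, ∀ y ∈ cell (r p - 1) p, s x y = 1 + s (U x) (U y)
  /-- the inverse of the Jacobian of `U` -/
  J : Δ → ℝ
  J_meas : Measurable J
  J_pos : ∀ x, 0 < J x
  J_spec : ∀ k p, ∀ A : Set Δ, A ⊆ cell k p → MeasurableSet A →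
      μ (U '' A) = ∫⁻ x in A, ENNReal.ofReal (J x)⁻¹ ∂μ
  /-- distortion constants -/
  Cd : ℝ
  β : ℝ
  Cd_pos : 0 < Cd
  β_pos : 0 < β
  β_lt_one : β < 1
  distortion : ∀ k p, ∀ x ∈ cell k p, ∀ y ∈ cell k p,
      |1 - J x / J y| ≤ Cd * β ^ (s (U x) (U y))

namespace YoungTower

variable {Δ : Type*} [MeasurableSpace Δ] {μ : Measure Δ} {U : Δ → Δ}

/-- The basis `Δ₀` of the tower. -/
def base (T : YoungTower μ U) : Set Δ := ⋃ m, T.cell 0 m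

/-- The set `Δ_n` of points at height `n`. -/
def level (T : YoungTower μ U) (n : ℕ) : Set Δ := ⋃ p, T.cell n p

/-- Exponentially small tails: `μ (Δ_n) ≤ C ρ^n`. -/
def ExpTails (T : YoungTower μ U) (C ρ : ℝ) : Prop :=
  ∀ n : ℕ, μ (T.level n) ≤ ENNReal.ofReal (C * ρ ^ n)

/-- `x` and `y` lie in the same element of the partition. -/
def SameCell (T : YoungTower μ U) (x y : Δ) : Prop :=
  ∃ p k, k < T.r p ∧ x ∈ T.cell k p ∧ y ∈ T.cell k p

/-- A function is locally Hölder (with constants `Cg`, `τ`) if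
`|g x - g y| ≤ Cg τ^(s x y)` for `x, y` in the same partition element. -/
def LocallyHolder (T : YoungTower μ U) (g : Δ → ℝ) (Cg τ : ℝ) : Prop :=
  ∀ x y : Δ, T.SameCell x y → |g x - g y| ≤ Cg * τ ^ (T.s x y)

/-- The first return time to the basis. -/
noncomputable def retTime (T : YoungTower μ U) (x : Δ) : ℕ :=
  sInf {n : ℕ | 0 < n ∧ U^[n] x ∈ T.base}

/-- The induced (first return) map on the basis. -/
noncomputable def retMap (T : YoungTower μ U) (x : Δ) : Δ := U^[T.retTime x] x

/-- `Ψ_n x`: the number of returns of `x` to the basis between times `1` and `n`. -/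
noncomputable def retCount (T : YoungTower μ U) (n : ℕ) (x : Δ) : ℕ :=
  ((Finset.Icc 1 n).filter fun k => U^[k] x ∈ T.base).card

/-- `G x = ∑_{j=0}^{ω(x)-1} g (U^j (π₀ x))`. -/
noncomputable def towerSum (T : YoungTower μ U) (g : Δ → ℝ) (x : Δ) : ℝ :=
  ∑ j ∈ Finset.range (T.height x), g (U^[j] (T.proj x))

/-- The transfer operator `Û u (x) = ∑_{U y = x} J y · u y`. -/
noncomputable def transfer (T : YoungTower μ U) (u : Δ → ℂ) (x : Δ) : ℂ :=
  ∑' y : {y : Δ // U y = x}, (T.J y.1 : ℂ) * u y.1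

/-- The perturbed transfer operator `Û_t u = Û (e^{itg} u)`. -/
noncomputable def transferPert (T : YoungTower μ U) (g : Δ → ℝ) (t : ℝ) (u : Δ → ℂ) :
    Δ → ℂ :=
  T.transfer fun y => Complex.exp (Complex.I * t * g y) * u y

/-- The weighted sup norm `‖u‖_m`. -/
noncomputable def normM (T : YoungTower μ U) (ε : ℝ) (u : Δ → ℂ) : ℝ≥0∞ :=
  sInf {C : ℝ≥0∞ | ∀ n : ℕ, ∀ᵐ x ∂μ, x ∈ T.level n →
    (‖u x‖₊ : ℝ≥0∞) ≤ C * ENNReal.ofReal (Real.exp (ε * n))}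

/-- The weighted Hölder seminorm `‖u‖_l`. -/
noncomputable def normL (T : YoungTower μ U) (ε τ : ℝ) (u : Δ → ℂ) : ℝ≥0∞ :=
  sInf {C : ℝ≥0∞ | ∀ n : ℕ, ∀ᵐ x ∂μ, ∀ᵐ y ∂μ,
    (x ∈ T.level n ∧ T.SameCell x y) →
    (‖u x - u y‖₊ : ℝ≥0∞) ≤ C * ENNReal.ofReal (Real.exp (ε * n) * τ ^ (T.s x y))}

/-- The norm `‖u‖ = ‖u‖_m + ‖u‖_l` of the Banach space `H`. -/
noncomputable def normH (T : YoungTower μ U) (ε τ : ℝ) (u : Δ → ℂ) : ℝ≥0∞ :=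
  T.normM ε u + T.normL ε τ u

/-- Membership in the Banach space `H`. -/
def MemH (T : YoungTower μ U) (ε τ : ℝ) (u : Δ → ℂ) : Prop :=
  Measurable u ∧ T.normH ε τ u < ⊤

end YoungTower

/-!
On a column `Δ_{0,p}` the first return map is `U^{r_p}`: it climbs the column preserving `μ` and
then maps the top cell onto `Δ₀` with inverse Jacobian `J`, whose distortion is at most `1 + Cd`.
So `U₀` pushes `μ|Δ_{0,p}` below `(1 + Cd)² μ(Δ_{0,p}) / μ(Δ₀) · μ|Δ₀`, and integrating
`exp (t ∑_{i ≤ m} φ ∘ U₀^i)` over `Δ₀` one factor at a time gives at most `R^m M`, where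
`M = ∫_{Δ₀} e^{tφ}` is finite for small `t > 0` by the exponential tails and
`R = (1 + Cd)² M / μ(Δ₀)`. The exponential Chebyshev inequality at level `n / 2` then bounds the
measure by `R^{κn} M e^{-tn/2}`, which decays exponentially once `R^κ < e^{t/2}`.
-/

section LintegralBounds

variable {X : Type*} [MeasurableSpace X] {ν : Measure X}

theorem measure_mul_setLIntegral_le_of_le_mul {h : X → ℝ≥0∞} (hh : Measurable h)
    {B c : Set X} (hBc : B ⊆ c) {D : ℝ≥0∞} (hD : ∀ x ∈ c, ∀ y ∈ c, h x ≤ D * h y) :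
    ν B * ∫⁻ x in c, h x ∂ν ≤ D ^ 2 * ν c * ∫⁻ x in B, h x ∂ν := by
  rcases c.eq_empty_or_nonempty with rfl | ⟨y₀, hy₀⟩
  · simp
  have hc : ∫⁻ x in c, h x ∂ν ≤ D * h y₀ * ν c := by
    rw [← setLIntegral_const]
    exact setLIntegral_mono measurable_const fun x hx => hD x hx y₀ hy₀
  have hB : h y₀ * ν B ≤ D * ∫⁻ x in B, h x ∂ν := by
    rw [← setLIntegral_const, ← lintegral_const_mul D hh]
    exact setLIntegral_mono (hh.const_mul D) fun x hx => hD y₀ hy₀ x (hBc hx)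
  calc ν B * ∫⁻ x in c, h x ∂ν ≤ ν B * (D * h y₀ * ν c) := by gcongr
    _ = D * ν c * (h y₀ * ν B) := by ring
    _ ≤ D * ν c * (D * ∫⁻ x in B, h x ∂ν) := by gcongr
    _ = D ^ 2 * ν c * ∫⁻ x in B, h x ∂ν := by ring

theorem lintegral_comp_le_of_measure_preimage_le {f : X → X} (hf : Measurable f) {ν' : Measure X}
    {C : ℝ≥0∞} (hC : ∀ s, MeasurableSet s → ν (f ⁻¹' s) ≤ C * ν' s)
    {g : X → ℝ≥0∞} (hg : Measurable g) :
    ∫⁻ x, g (f x) ∂ν ≤ C * ∫⁻ x, g x ∂ν' := by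
  have hmap : ν.map f ≤ C • ν' := Measure.le_iff.2 fun s hs => by
    simpa [Measure.map_apply hf hs] using hC s hs
  calc ∫⁻ x, g (f x) ∂ν = ∫⁻ x, g x ∂(ν.map f) := (lintegral_map hg hf).symm
    _ ≤ ∫⁻ x, g x ∂(C • ν') := lintegral_mono' hmap le_rfl
    _ = C * ∫⁻ x, g x ∂ν' := lintegral_smul_measure C g

theorem lintegral_prod_iterate_le {f : X → X} (hf : Measurable f) {w : X → ℝ≥0∞}
    (hw : Measurable w) {R : ℝ≥0∞}
    (hR : ∀ g : X → ℝ≥0∞, Measurable g → ∫⁻ x, w x * g (f x) ∂ν ≤ R * ∫⁻ x, g x ∂ν) (m : ℕ) :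
    ∫⁻ x, ∏ i ∈ Finset.range (m + 1), w (f^[i] x) ∂ν ≤ R ^ m * ∫⁻ x, w x ∂ν := by
  induction m with
  | zero => simp
  | succ m ih =>
    have hprod : Measurable fun x => ∏ i ∈ Finset.range (m + 1), w (f^[i] x) :=
      Finset.measurable_prod _ fun i _ => hw.comp (hf.iterate i)
    calc ∫⁻ x, ∏ i ∈ Finset.range (m + 2), w (f^[i] x) ∂ν
        = ∫⁻ x, w x * ∏ i ∈ Finset.range (m + 1), w (f^[i] (f x)) ∂ν := by
          simp only [Finset.prod_range_succ' _ (m + 1), Function.iterate_succ_apply,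
            Function.iterate_zero_apply, mul_comm]
      _ ≤ R * ∫⁻ x, ∏ i ∈ Finset.range (m + 1), w (f^[i] x) ∂ν := hR _ hprod
      _ ≤ R * (R ^ m * ∫⁻ x, w x ∂ν) := by gcongr
      _ = R ^ (m + 1) * ∫⁻ x, w x ∂ν := by ring

theorem measure_inter_le_mul_exp_le {s : Set X} (hs : MeasurableSet s) {S : X → ℝ}
    (hS : Measurable S) {t : ℝ} (ht : 0 ≤ t) (a : ℝ) :
    ν (s ∩ {x | a ≤ S x}) * ENNReal.ofReal (Real.exp (t * a))
      ≤ ∫⁻ x in s, ENNReal.ofReal (Real.exp (t * S x)) ∂ν := by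
  have hmeas : Measurable fun x => ENNReal.ofReal (Real.exp (t * S x)) := by fun_prop
  refine le_trans ?_
    (mul_meas_ge_le_lintegral₀ hmeas.aemeasurable (ENNReal.ofReal (Real.exp (t * a))))
  rw [mul_comm, Measure.restrict_apply' hs, inter_comm]
  gcongr
  intro hle
  gcongr

end LintegralBounds

theorem exists_pow_floor_le_exp {R : ℝ≥0∞} (hR : R ≠ ⊤) {c : ℝ} (hc : 0 < c) :
    ∃ κ₀ : ℝ, 0 < κ₀ ∧ ∀ κ ≤ κ₀, ∀ n : ℕ,
      R ^ ⌊κ * n⌋₊ ≤ ENNReal.ofReal (Real.exp (c * n)) := by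
  set K := max 1 R.toReal
  have hK : 0 ≤ Real.log K := Real.log_nonneg (le_max_left _ _)
  refine ⟨c / (Real.log K + 1), by positivity, fun κ hκ n => ?_⟩
  have hm : (⌊κ * n⌋₊ : ℝ) ≤ c / (Real.log K + 1) * n :=
    (Nat.cast_le.2 (Nat.floor_mono (by gcongr))).trans (Nat.floor_le (by positivity))
  have hlog : (⌊κ * n⌋₊ : ℝ) * Real.log K ≤ c * n := by
    calc (⌊κ * n⌋₊ : ℝ) * Real.log K ≤ c / (Real.log K + 1) * n * Real.log K := by gcongr
      _ = c * n * (Real.log K / (Real.log K + 1)) := by ring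
      _ ≤ c * n * 1 := by gcongr; exact div_le_one_of_le₀ (by linarith) (by positivity)
      _ = c * n := mul_one _
  calc R ^ ⌊κ * n⌋₊ ≤ ENNReal.ofReal K ^ ⌊κ * n⌋₊ := by
        gcongr
        exact ENNReal.le_ofReal_iff_toReal_le hR (by positivity) |>.2 (le_max_right _ _)
    _ = ENNReal.ofReal (Real.exp (⌊κ * n⌋₊ * Real.log K)) := by
        rw [Real.exp_nat_mul, Real.exp_log (by positivity), ENNReal.ofReal_pow (by positivity)]
    _ ≤ ENNReal.ofReal (Real.exp (c * n)) := by gcongr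

namespace YoungTower

variable {Δ : Type*} [MeasurableSpace Δ] {μ : Measure Δ} {U : Δ → Δ} (T : YoungTower μ U)

theorem measurableSet_base : MeasurableSet T.base :=
  MeasurableSet.iUnion fun m => T.cell_meas 0 m

theorem r_sub_one_lt (p : ℕ) : T.r p - 1 < T.r p := Nat.sub_lt (T.r_pos p) one_pos

theorem pairwise_disjoint_cell (k : ℕ) : Pairwise (Function.onFun Disjoint (T.cell k)) :=
  fun p q hpq => T.cell_disj k p k q (by simp [hpq])

theorem iterate_mem_cell {p k j : ℕ} {x : Δ} (hx : x ∈ T.cell k p) (hj : k + j < T.r p) :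
    U^[j] x ∈ T.cell (k + j) p := by
  induction j with
  | zero => simpa using hx
  | succ j ih =>
    rw [Function.iterate_succ_apply']
    exact (T.map_up p (k + j) (by omega)).mapsTo (ih (by omega))

theorem iterate_mem_cell_of_mem_cell_zero {p j : ℕ} {x : Δ} (hx : x ∈ T.cell 0 p)
    (hj : j < T.r p) : U^[j] x ∈ T.cell j p := by
  simpa using T.iterate_mem_cell hx (j := j) (by omega)

theorem iterate_r_eq {p : ℕ} (x : Δ) : U^[T.r p] x = U (U^[T.r p - 1] x) := by
  rw [← Function.iterate_succ_apply' U, Nat.succ_eq_add_one, Nat.sub_add_cancel (T.r_pos p)]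

theorem iterate_r_mem_base {p : ℕ} {x : Δ} (hx : x ∈ T.cell 0 p) : U^[T.r p] x ∈ T.base := by
  rw [iterate_r_eq]
  exact (T.map_top p).mapsTo (T.iterate_mem_cell_of_mem_cell_zero hx (T.r_sub_one_lt p))

theorem notMem_base_of_mem_cell {p k : ℕ} (hk : k ≠ 0) {x : Δ} (hx : x ∈ T.cell k p) :
    x ∉ T.base := by
  simp only [base, mem_iUnion, not_exists]
  exact fun m hm => (T.cell_disj k p 0 m (by simp [hk])).ne_of_mem hx hm rfl

theorem exists_iterate_mem_base (x : Δ) : ∃ n, 0 < n ∧ U^[n] x ∈ T.base := by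
  obtain ⟨p, k, hk, hx⟩ := T.cell_cover x
  have htop : U^[T.r p - 1 - k] x ∈ T.cell (T.r p - 1) p := by
    simpa [show k + (T.r p - 1 - k) = T.r p - 1 by omega] using
      T.iterate_mem_cell hx (j := T.r p - 1 - k) (by omega)
  refine ⟨T.r p - k, by omega, ?_⟩
  rw [show T.r p - k = (T.r p - 1 - k) + 1 by omega, Function.iterate_succ_apply']
  exact (T.map_top p).mapsTo htop

theorem retTime_eq {p : ℕ} {x : Δ} (hx : x ∈ T.cell 0 p) : T.retTime x = T.r p := by
  have hmem : T.r p ∈ {n | 0 < n ∧ U^[n] x ∈ T.base} := ⟨T.r_pos p, T.iterate_r_mem_base hx⟩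
  refine le_antisymm (Nat.sInf_le hmem) (le_csInf ⟨_, hmem⟩ fun k ⟨hk, hkb⟩ => ?_)
  by_contra! hlt
  exact T.notMem_base_of_mem_cell hk.ne' (T.iterate_mem_cell_of_mem_cell_zero hx hlt) hkb

theorem retMap_eq {p : ℕ} {x : Δ} (hx : x ∈ T.cell 0 p) : T.retMap x = U^[T.r p] x := by
  rw [retMap, T.retTime_eq hx]

theorem retTime_eq_find (x : Δ) : T.retTime x = Nat.find (T.exists_iterate_mem_base x) := by
  convert Nat.sInf_def (T.exists_iterate_mem_base x) <;> rfl

theorem measurable_retTime : Measurable T.retTime := by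
  simp_rw [funext T.retTime_eq_find]
  exact measurable_find _ fun k =>
    (MeasurableSet.const _).inter
      (T.measurableSet_base.preimage (T.measurable_U.iterate k))

theorem measurable_retMap : Measurable T.retMap := by
  simp_rw [funext fun x => show T.retMap x = _ from by rw [retMap, T.retTime_eq_find x]]
  exact Measurable.find (f := fun n => U^[n]) (p := fun n x => 0 < n ∧ U^[n] x ∈ T.base)
    (fun n => T.measurable_U.iterate n) (fun n =>
    (MeasurableSet.const _).inter (T.measurableSet_base.preimage (T.measurable_U.iterate n)))
    T.exists_iterate_mem_base

theorem measure_preimage_inter_cell {p k : ℕ} (hk : k + 1 < T.r p) {B : Set Δ}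
    (hB : MeasurableSet B) (hBc : B ⊆ T.cell (k + 1) p) :
    μ (U ⁻¹' B ∩ T.cell k p) = μ B := by
  rw [← T.map_up_measure p k hk _ inter_subset_right
    ((hB.preimage T.measurable_U).inter (T.cell_meas k p)), image_preimage_inter,
    (T.map_up p k hk).image_eq, inter_eq_left.2 hBc]

theorem measure_preimage_iterate_inter_cell_zero {p j : ℕ} (hj : j < T.r p) {B : Set Δ}
    (hB : MeasurableSet B) (hBc : B ⊆ T.cell j p) :
    μ (U^[j] ⁻¹' B ∩ T.cell 0 p) = μ B := by
  induction j generalizing B with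
  | zero => simp [inter_eq_left.2 hBc]
  | succ j ih =>
    have hpre : U^[j + 1] ⁻¹' B ∩ T.cell 0 p = U^[j] ⁻¹' (U ⁻¹' B ∩ T.cell j p) ∩ T.cell 0 p := by
      ext x
      simp only [mem_inter_iff, mem_preimage, Function.iterate_succ_apply']
      exact ⟨fun ⟨hB, hx⟩ => ⟨⟨hB, T.iterate_mem_cell_of_mem_cell_zero hx (by omega)⟩, hx⟩,
        fun ⟨⟨hB, _⟩, hx⟩ => ⟨hB, hx⟩⟩
    rw [hpre, ih (by omega) ((hB.preimage T.measurable_U).inter (T.cell_meas j p))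
      inter_subset_right, T.measure_preimage_inter_cell hj hB hBc]

theorem measure_cell_eq {p j : ℕ} (hj : j < T.r p) : μ (T.cell j p) = μ (T.cell 0 p) := by
  have hsub : T.cell 0 p ⊆ U^[j] ⁻¹' T.cell j p :=
    fun x hx => T.iterate_mem_cell_of_mem_cell_zero hx hj
  rw [← T.measure_preimage_iterate_inter_cell_zero hj (T.cell_meas j p) subset_rfl,
    inter_eq_right.2 hsub]

theorem measure_base_ne_zero : μ T.base ≠ 0 := by
  have := T.isProb
  intro h0
  have hcell : ∀ p k, μ (T.cell k p) = 0 := fun p k => by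
    rcases lt_or_ge k (T.r p) with hk | hk
    · rw [T.measure_cell_eq hk]
      exact measure_mono_null (subset_iUnion (fun m => T.cell 0 m) p) h0
    · simp [T.cell_empty k p hk]
  have hcover : (univ : Set Δ) ⊆ ⋃ p, ⋃ k, T.cell k p := fun x _ => by
    obtain ⟨p, k, -, hx⟩ := T.cell_cover x
    exact mem_iUnion₂.2 ⟨p, k, hx⟩
  simpa using measure_mono_null hcover
    (measure_iUnion_null fun p => measure_iUnion_null fun k => hcell p k)

theorem J_le_mul_J {p k : ℕ} {x y : Δ} (hx : x ∈ T.cell k p) (hy : y ∈ T.cell k p) :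
    T.J x ≤ (1 + T.Cd) * T.J y := by
  have hβ : T.β ^ T.s (U x) (U y) ≤ 1 := pow_le_one₀ T.β_pos.le T.β_lt_one.le
  have hratio : T.J x / T.J y ≤ 1 + T.Cd := by
    have := (abs_le.1 (T.distortion k p x hx y hy)).1
    nlinarith [T.Cd_pos]
  rwa [div_le_iff₀ (T.J_pos y)] at hratio

theorem measure_cell_inter_preimage_retMap_mul_le (p : ℕ) {s : Set Δ} (hs : MeasurableSet s) :
    μ (T.cell 0 p ∩ T.retMap ⁻¹' s) * μ T.base
      ≤ ENNReal.ofReal (1 + T.Cd) ^ 2 * μ (T.cell 0 p) * μ (s ∩ T.base) := by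
  set c := T.cell (T.r p - 1) p
  set B := U ⁻¹' (s ∩ T.base) ∩ c
  have hr := T.r_sub_one_lt p
  have hBm : MeasurableSet B :=
    ((hs.inter T.measurableSet_base).preimage T.measurable_U).inter (T.cell_meas _ _)
  have hpre : T.cell 0 p ∩ T.retMap ⁻¹' s = U^[T.r p - 1] ⁻¹' B ∩ T.cell 0 p := by
    ext x
    simp only [mem_inter_iff, mem_preimage, B]
    constructor
    · rintro ⟨hx, hxs⟩
      rw [T.retMap_eq hx] at hxs
      refine ⟨⟨⟨?_, ?_⟩, T.iterate_mem_cell_of_mem_cell_zero hx hr⟩, hx⟩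
      · rwa [← T.iterate_r_eq]
      · rw [← T.iterate_r_eq]
        exact T.iterate_r_mem_base hx
    · rintro ⟨⟨⟨hxs, -⟩, -⟩, hx⟩
      rw [T.retMap_eq hx, T.iterate_r_eq]
      exact ⟨hx, hxs⟩
  have hUB : U '' B = s ∩ T.base := by
    rw [image_preimage_inter, (T.map_top p).image_eq, ← base, inter_eq_left.2 inter_subset_right]
  have hUc : U '' c = T.base := (T.map_top p).image_eq
  rw [hpre, T.measure_preimage_iterate_inter_cell_zero hr hBm inter_subset_right, ← hUB, ← hUc,
    T.J_spec _ p B inter_subset_right hBm, T.J_spec _ p c subset_rfl (T.cell_meas _ _),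
    ← T.measure_cell_eq hr]
  refine measure_mul_setLIntegral_le_of_le_mul (h := fun x => ENNReal.ofReal (T.J x)⁻¹)
    (T.J_meas.inv.ennreal_ofReal) inter_subset_right fun x hx y hy => ?_
  rw [← ENNReal.ofReal_mul (by linarith [T.Cd_pos])]
  refine ENNReal.ofReal_le_ofReal ?_
  rw [← div_eq_mul_inv, le_div_iff₀ (T.J_pos y), inv_mul_eq_div, div_le_iff₀ (T.J_pos x)]
  exact T.J_le_mul_J hy hx

theorem setLIntegral_cell_comp_retMap_le (p : ℕ) {g : Δ → ℝ≥0∞} (hg : Measurable g) :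
    ∫⁻ x in T.cell 0 p, g (T.retMap x) ∂μ
      ≤ ENNReal.ofReal (1 + T.Cd) ^ 2 * μ (T.cell 0 p) * (μ T.base)⁻¹ * ∫⁻ x in T.base, g x ∂μ := by
  have := T.isProb
  refine lintegral_comp_le_of_measure_preimage_le T.measurable_retMap (fun s hs => ?_) hg
  rw [Measure.restrict_apply (hs.preimage T.measurable_retMap), Measure.restrict_apply hs,
    inter_comm, mul_right_comm _ (μ T.base)⁻¹, ← div_eq_mul_inv,
    ENNReal.le_div_iff_mul_le (Or.inl T.measure_base_ne_zero) (Or.inl (measure_ne_top _ _))]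
  exact T.measure_cell_inter_preimage_retMap_mul_le p hs

theorem setLIntegral_base_eq_tsum (g : Δ → ℝ≥0∞) :
    ∫⁻ x in T.base, g x ∂μ = ∑' p, ∫⁻ x in T.cell 0 p, g x ∂μ :=
  lintegral_iUnion (fun p => T.cell_meas 0 p) (T.pairwise_disjoint_cell 0) g

theorem setLIntegral_base_comp_retTime (f : ℕ → ℝ≥0∞) :
    ∫⁻ x in T.base, f (T.retTime x) ∂μ = ∑' p, f (T.r p) * μ (T.cell 0 p) := by
  rw [setLIntegral_base_eq_tsum]
  refine tsum_congr fun p => ?_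
  rw [setLIntegral_congr_fun (T.cell_meas 0 p) fun x hx => by rw [T.retTime_eq hx],
    setLIntegral_const]

theorem setLIntegral_base_mul_comp_retMap_le (f : ℕ → ℝ≥0∞) {g : Δ → ℝ≥0∞} (hg : Measurable g) :
    ∫⁻ x in T.base, f (T.retTime x) * g (T.retMap x) ∂μ
      ≤ ENNReal.ofReal (1 + T.Cd) ^ 2 * (∫⁻ x in T.base, f (T.retTime x) ∂μ) * (μ T.base)⁻¹
        * ∫⁻ x in T.base, g x ∂μ := by
  set C := ENNReal.ofReal (1 + T.Cd) ^ 2 * (μ T.base)⁻¹ * ∫⁻ x in T.base, g x ∂μ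
  have hcol : ∀ p, ∫⁻ x in T.cell 0 p, f (T.retTime x) * g (T.retMap x) ∂μ
      ≤ f (T.r p) * μ (T.cell 0 p) * C := fun p => by
    rw [setLIntegral_congr_fun (T.cell_meas 0 p) fun x hx => by rw [T.retTime_eq hx],
      lintegral_const_mul (f := fun x => g (T.retMap x)) _ (hg.comp T.measurable_retMap)]
    calc f (T.r p) * ∫⁻ x in T.cell 0 p, g (T.retMap x) ∂μ
        ≤ f (T.r p) * (ENNReal.ofReal (1 + T.Cd) ^ 2 * μ (T.cell 0 p) * (μ T.base)⁻¹
          * ∫⁻ x in T.base, g x ∂μ) := by gcongr; exact T.setLIntegral_cell_comp_retMap_le p hg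
      _ = f (T.r p) * μ (T.cell 0 p) * C := by ring
  calc ∫⁻ x in T.base, f (T.retTime x) * g (T.retMap x) ∂μ
      ≤ ∑' p, f (T.r p) * μ (T.cell 0 p) * C := by
        rw [setLIntegral_base_eq_tsum]
        exact ENNReal.tsum_le_tsum hcol
    _ = _ := by rw [ENNReal.tsum_mul_right, ← setLIntegral_base_comp_retTime]; ring

theorem tsum_r_mul_measure_cell_le (f : ℕ → ℝ≥0∞) :
    ∑' p, f (T.r p) * μ (T.cell 0 p) ≤ ∑' k, f (k + 1) * μ (T.level k) := by
  calc ∑' p, f (T.r p) * μ (T.cell 0 p)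
      = ∑' p, f (T.r p - 1 + 1) * μ (T.cell (T.r p - 1) p) := by
        refine tsum_congr fun p => ?_
        rw [Nat.sub_add_cancel (T.r_pos p), T.measure_cell_eq (T.r_sub_one_lt p)]
    _ ≤ ∑' p, ∑' k, f (k + 1) * μ (T.cell k p) :=
        ENNReal.tsum_le_tsum fun p => ENNReal.le_tsum (f := fun k => f (k + 1) * μ (T.cell k p)) _
    _ = ∑' k, f (k + 1) * μ (T.level k) := by
        rw [ENNReal.tsum_comm]
        refine tsum_congr fun k => ?_
        rw [ENNReal.tsum_mul_left, level,
          measure_iUnion (T.pairwise_disjoint_cell k) fun p => T.cell_meas k p]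

noncomputable def expMoment (t : ℝ) : ℝ≥0∞ :=
  ∫⁻ x in T.base, ENNReal.ofReal (Real.exp (t * T.retTime x)) ∂μ

theorem exists_pos_expMoment_lt_top {C ρ : ℝ} (hρ0 : 0 < ρ) (hρ1 : ρ < 1)
    (htails : T.ExpTails C ρ) : ∃ t : ℝ, 0 < t ∧ T.expMoment t < ⊤ := by
  have hlog := Real.log_neg hρ0 hρ1
  obtain ⟨t, ht, hq⟩ : ∃ t : ℝ, 0 < t ∧ Real.exp t * ρ < 1 := by
    refine ⟨-Real.log ρ / 2, by linarith, ?_⟩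
    calc Real.exp (-Real.log ρ / 2) * ρ = Real.exp (-Real.log ρ / 2 + Real.log ρ) := by
          rw [Real.exp_add, Real.exp_log hρ0]
      _ < 1 := Real.exp_lt_one_iff.2 (by linarith)
  refine ⟨t, ht, ?_⟩
  have hterm : ∀ k : ℕ, ENNReal.ofReal (Real.exp (t * (k + 1 : ℕ))) * μ (T.level k)
      ≤ ENNReal.ofReal (Real.exp t * C) * ENNReal.ofReal (Real.exp t * ρ) ^ k := fun k => by
    calc ENNReal.ofReal (Real.exp (t * (k + 1 : ℕ))) * μ (T.level k)
        ≤ ENNReal.ofReal (Real.exp (t * (k + 1 : ℕ))) * ENNReal.ofReal (C * ρ ^ k) := by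
          gcongr; exact htails k
      _ = ENNReal.ofReal (Real.exp t * C) * ENNReal.ofReal (Real.exp t * ρ) ^ k := by
          rw [← ENNReal.ofReal_mul (Real.exp_nonneg _), ← ENNReal.ofReal_pow (by positivity),
            ← ENNReal.ofReal_mul' (by positivity)]
          congr 1
          rw [Nat.cast_succ, mul_add_one, Real.exp_add, mul_comm t, Real.exp_nat_mul]
          ring
  calc T.expMoment t = _ :=
        T.setLIntegral_base_comp_retTime fun k => ENNReal.ofReal (Real.exp (t * k))
    _ ≤ _ := T.tsum_r_mul_measure_cell_le fun k => ENNReal.ofReal (Real.exp (t * k))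
    _ ≤ ∑' k : ℕ, ENNReal.ofReal (Real.exp t * C) * ENNReal.ofReal (Real.exp t * ρ) ^ k :=
        ENNReal.tsum_le_tsum hterm
    _ < ⊤ := by
        rw [ENNReal.tsum_mul_left]
        exact ENNReal.mul_lt_top ENNReal.ofReal_lt_top
          (tsum_geometric_lt_top.2 (ENNReal.ofReal_lt_one.2 hq))

theorem measure_sum_retTime_ge_mul_exp_le {t : ℝ} (ht : 0 ≤ t) (a : ℝ) (m : ℕ) :
    μ {x | x ∈ T.base ∧ a ≤ ∑ i ∈ Finset.range (m + 1), (T.retTime (T.retMap^[i] x) : ℝ)}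
        * ENNReal.ofReal (Real.exp (t * a))
      ≤ (ENNReal.ofReal (1 + T.Cd) ^ 2 * T.expMoment t * (μ T.base)⁻¹) ^ m * T.expMoment t := by
  have hφ : Measurable fun k : ℕ => ENNReal.ofReal (Real.exp (t * k)) := measurable_from_nat
  have hsum : Measurable fun x => ∑ i ∈ Finset.range (m + 1), (T.retTime (T.retMap^[i] x) : ℝ) :=
    Finset.measurable_sum _ fun i _ =>
      measurable_from_nat.comp (T.measurable_retTime.comp (T.measurable_retMap.iterate i))
  calc _ ≤ ∫⁻ x in T.base, ENNReal.ofReal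
        (Real.exp (t * ∑ i ∈ Finset.range (m + 1), (T.retTime (T.retMap^[i] x) : ℝ))) ∂μ :=
        measure_inter_le_mul_exp_le T.measurableSet_base hsum ht a
    _ = ∫⁻ x in T.base, ∏ i ∈ Finset.range (m + 1),
          ENNReal.ofReal (Real.exp (t * T.retTime (T.retMap^[i] x))) ∂μ := by
        simp_rw [Finset.mul_sum, Real.exp_sum]
        congr 1 with x
        exact ENNReal.ofReal_prod_of_nonneg fun i _ => Real.exp_nonneg _
    _ ≤ _ := lintegral_prod_iterate_le T.measurable_retMap (hφ.comp T.measurable_retTime)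
        (fun g hg => T.setLIntegral_base_mul_comp_retMap_le (fun k => ENNReal.ofReal
          (Real.exp (t * k))) hg) m

end YoungTower

theorem return_time_large_deviations_general
    {Δ : Type*} [MeasurableSpace Δ] {μ : Measure Δ} {U : Δ → Δ}
    (T : YoungTower μ U)
    (C0 ρ : ℝ) (hρ0 : 0 < ρ) (hρ1 : ρ < 1) (htails : T.ExpTails C0 ρ) :
    ∃ κ₀ : ℝ, 0 < κ₀ ∧ ∀ κ : ℝ, 0 < κ → κ ≤ κ₀ →
      ∃ C' : ℝ, 0 < C' ∧ ∃ θ : ℝ, 0 < θ ∧ θ < 1 ∧ ∀ n : ℕ,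
        μ {x : Δ | x ∈ T.base ∧
            (n : ℝ) / 2 ≤ ∑ i ∈ Finset.range (⌊κ * n⌋₊ + 1),
              (T.retTime (T.retMap^[i] x) : ℝ)} ≤
          ENNReal.ofReal (C' * θ ^ n) := by
  obtain ⟨t, ht, hM⟩ := T.exists_pos_expMoment_lt_top hρ0 hρ1 htails
  set M := T.expMoment t
  have hR : ENNReal.ofReal (1 + T.Cd) ^ 2 * M * (μ T.base)⁻¹ ≠ ⊤ := by
    have := ENNReal.inv_ne_top.2 T.measure_base_ne_zero
    finiteness
  obtain ⟨κ₀, hκ₀, hpow⟩ := exists_pow_floor_le_exp hR (show 0 < t / 4 by positivity)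
  refine ⟨κ₀, hκ₀, fun κ _ hκ => ⟨M.toReal + 1, by positivity, Real.exp (-(t / 4)),
    Real.exp_pos _, Real.exp_lt_one_iff.2 (by linarith), fun n => ?_⟩⟩
  have hε : ENNReal.ofReal (Real.exp (t * (n / 2))) ≠ 0 := by simp [Real.exp_pos]
  calc _ ≤ (ENNReal.ofReal (1 + T.Cd) ^ 2 * M * (μ T.base)⁻¹) ^ ⌊κ * n⌋₊ * M
        / ENNReal.ofReal (Real.exp (t * (n / 2))) :=
        (ENNReal.le_div_iff_mul_le (Or.inl hε) (Or.inl ENNReal.ofReal_ne_top)).2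
          (T.measure_sum_retTime_ge_mul_exp_le ht.le _ _)
    _ ≤ ENNReal.ofReal (Real.exp (t / 4 * n)) * ENNReal.ofReal (M.toReal + 1)
        / ENNReal.ofReal (Real.exp (t * (n / 2))) := by
        gcongr
        · exact hpow κ hκ n
        · exact ENNReal.le_ofReal_iff_toReal_le hM.ne (by positivity) |>.2 (by linarith)
    _ = ENNReal.ofReal ((M.toReal + 1) * Real.exp (-(t / 4)) ^ n) := by
        rw [← ENNReal.ofReal_mul (Real.exp_nonneg _), ← ENNReal.ofReal_div_of_pos (Real.exp_pos _),
          ← Real.exp_nat_mul, mul_div_right_comm, ← Real.exp_sub]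
        ring_nf

/-- Exponential bound on the set of points with big Birkhoff sums of the return time
(bound on `μ(Γ_n)` in Lemma `lem_renouv_temp`): for every small enough `κ > 0`, the
measure of `{x ∈ Δ₀ : ∑_{0 ≤ i ≤ κ n} φ(U₀^i x) ≥ n/2}` is exponentially small in `n`. -/
theorem return_time_large_deviations
    {Δ : Type*} [MeasurableSpace Δ] {μ : Measure Δ} {U : Δ → Δ}
    (T : YoungTower μ U)
    (C0 ρ : ℝ) (hC0 : 0 < C0) (hρ0 : 0 < ρ) (hρ1 : ρ < 1) (htails : T.ExpTails C0 ρ) :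
    ∃ κ₀ : ℝ, 0 < κ₀ ∧ ∀ κ : ℝ, 0 < κ → κ ≤ κ₀ →
      ∃ C' : ℝ, 0 < C' ∧ ∃ θ : ℝ, 0 < θ ∧ θ < 1 ∧ ∀ n : ℕ,
        μ {x : Δ | x ∈ T.base ∧
            (n : ℝ) / 2 ≤ ∑ i ∈ Finset.range (⌊κ * n⌋₊ + 1),
              (T.retTime (T.retMap^[i] x) : ℝ)} ≤
          ENNReal.ofReal (C' * θ ^ n) :=
  return_time_large_deviations_general T C0 ρ hρ0 hρ1 htails
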